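/- arXiv:2002.12510 — 2 statements merged into one kernel-verified Lean document; each statement's English description precedes it below -/
import Mathlib

section
/- With P, P' and the 2-approval scoring vector as in the construction from the 3DM instance (described in the context), for every completion P̄ of P and every total profile Q on C it holds that s(P̄ ∪ Q, c) = s(P' ∪ Q, c); i.e., the score of the distinguished candidate c is the same in all completions of P. -/
/-!
Under 2-approval, `c` scores in a vote only if it is among the top two. In every `p'ᵢ` the
candidates `x_{i₁}` and `y_{i₂}` occupy the top two positions, and the partial vote `pᵢ` already
fixes `x_{i₁} ≻ y_{i₂} ≻ c`, so in every completion `c` still has two candidates above it. Hence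
`c` scores nothing in any vote of `P'` or of a completion of `P`, and only `Q` contributes.
-/

/-- The score of candidate `c` in a profile (a list of votes) under scoring vector `s`.
A vote assigns each candidate a position in `Fin m` (position `0` being most preferred). -/
def score {C : Type*} {m : ℕ} (s : Fin m → ℕ) (P : List (C ≃ Fin m)) (c : C) : ℕ :=
  (P.map fun T => s (T c)).sum

/-- The `k`-approval scoring vector of length `m`: the top `k` positions get one point. -/
def kApproval (m k : ℕ) : Fin m → ℕ := fun pos => if (pos : ℕ) < k then 1 else 0

/-- Candidates of Reduction 1: the element candidates of `X`, `Y`, `Z` (each of size `q`)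
together with the distinguished candidate `c` and the fresh candidates `d₁` and `w`. -/
inductive Cand1 (q : ℕ) where
  | x (i : Fin q)
  | y (i : Fin q)
  | z (i : Fin q)
  | c
  | d1
  | w

section Score

variable {C : Type*} {m : ℕ} (s : Fin m → ℕ) (c : C)

theorem score_append (P Q : List (C ≃ Fin m)) :
    score s (P ++ Q) c = score s P c + score s Q c := by
  simp only [score, List.map_append, List.sum_append]

theorem score_ofFn {t : ℕ} (T : Fin t → (C ≃ Fin m)) :
    score s (List.ofFn T) c = ∑ i, s (T i c) := by
  simp only [score, List.map_ofFn, List.sum_ofFn, Function.comp_def]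

end Score

theorem kApproval_eq_zero_of_le {m k : ℕ} {l : Fin m} (h : k ≤ l.val) : kApproval m k l = 0 :=
  if_neg (Nat.not_lt.mpr h)

theorem kApproval_two_eq_zero_of_lt_of_lt {m : ℕ} {i j l : Fin m} (hij : i < j) (hjl : j < l) :
    kApproval m 2 l = 0 :=
  kApproval_eq_zero_of_le (by rw [Fin.lt_def] at hij hjl; omega)

theorem Equiv.one_lt_val_apply {α : Type*} {m : ℕ} (e : α ≃ Fin m) {a b d : α}
    (ha : (e a).val = 0) (hb : (e b).val = 1) (hda : d ≠ a) (hdb : d ≠ b) :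
    1 < (e d).val := by
  have hda' : (e d).val ≠ (e a).val := Fin.val_ne_of_ne (e.injective.ne hda)
  have hdb' : (e d).val ≠ (e b).val := Fin.val_ne_of_ne (e.injective.ne hdb)
  omega

theorem stmt3_general (q t : ℕ)
    (S : Fin t → Fin q × Fin q × Fin q)
    (p' : Fin t → (Cand1 q ≃ Fin (3 * q + 3)))
    (hx : ∀ i, (p' i (Cand1.x (S i).1)).val = 0)
    (hy : ∀ i, (p' i (Cand1.y (S i).2.1)).val = 1)
    (T : Fin t → (Cand1 q ≃ Fin (3 * q + 3)))
    (hT : ∀ (i : Fin t) (u v : Cand1 q),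
      u ≠ Cand1.z (S i).2.2 → u ≠ Cand1.d1 →
      v ≠ Cand1.z (S i).2.2 → v ≠ Cand1.d1 →
      p' i u < p' i v → T i u < T i v)
    (Q : List (Cand1 q ≃ Fin (3 * q + 3))) :
    score (kApproval (3 * q + 3) 2) (List.ofFn T ++ Q) Cand1.c =
      score (kApproval (3 * q + 3) 2) (List.ofFn p' ++ Q) Cand1.c := by
  have hxy : ∀ i, p' i (Cand1.x (S i).1) < p' i (Cand1.y (S i).2.1) := fun i => by
    rw [Fin.lt_def, hx i, hy i]; exact Nat.one_pos
  have hyc : ∀ i, p' i (Cand1.y (S i).2.1) < p' i Cand1.c := fun i => by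
    rw [Fin.lt_def, hy i]
    exact (p' i).one_lt_val_apply (hx i) (hy i) nofun nofun
  have hp' : ∀ i, kApproval _ 2 (p' i Cand1.c) = 0 := fun i =>
    kApproval_two_eq_zero_of_lt_of_lt (hxy i) (hyc i)
  have hT' : ∀ i, kApproval _ 2 (T i Cand1.c) = 0 := fun i =>
    kApproval_two_eq_zero_of_lt_of_lt
      (hT i (Cand1.x (S i).1) (Cand1.y (S i).2.1) nofun nofun nofun nofun (hxy i))
      (hT i (Cand1.y (S i).2.1) Cand1.c nofun nofun nofun nofun (hyc i))
  simp only [score_append, score_ofFn, hp', hT']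

/-- in Reduction 1 (for 2-approval, from a 3DM instance with triples
`S i = (x_{i₁}, y_{i₂}, z_{i₃})`), with `p'ᵢ = x_{i₁} ≻ y_{i₂} ≻ z_{i₃} ≻ d₁ ≻ C⃗'ᵢ`
(where `c` precedes `w` in `C⃗'ᵢ`) and `pᵢ` the partial chain obtained by deleting
`z_{i₃}` and `d₁`, for every completion `T` of `P = (p₁, …, p_t)` and every total profile
`Q`, the score of `c` in `T ∪ Q` equals its score in `P' ∪ Q`. -/
theorem stmt3 (q t : ℕ) (hq : 1 ≤ q)
    (S : Fin t → Fin q × Fin q × Fin q)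
    (p' : Fin t → (Cand1 q ≃ Fin (3 * q + 3)))
    (hx : ∀ i, (p' i (Cand1.x (S i).1)).val = 0)
    (hy : ∀ i, (p' i (Cand1.y (S i).2.1)).val = 1)
    (hz : ∀ i, (p' i (Cand1.z (S i).2.2)).val = 2)
    (hd : ∀ i, (p' i Cand1.d1).val = 3)
    (hcw : ∀ i, p' i Cand1.c < p' i Cand1.w)
    (T : Fin t → (Cand1 q ≃ Fin (3 * q + 3)))
    (hT : ∀ (i : Fin t) (u v : Cand1 q),
      u ≠ Cand1.z (S i).2.2 → u ≠ Cand1.d1 →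
      v ≠ Cand1.z (S i).2.2 → v ≠ Cand1.d1 →
      p' i u < p' i v → T i u < T i v)
    (Q : List (Cand1 q ≃ Fin (3 * q + 3))) :
    score (kApproval (3 * q + 3) 2) (List.ofFn T ++ Q) Cand1.c =
      score (kApproval (3 * q + 3) 2) (List.ofFn p' ++ Q) Cand1.c :=
  stmt3_general q t S p' hx hy T hT Q
end

section
/- With P, P', Q and the scoring vector s as in Reduction 3 from the 3DM instance (described in the context, with λ := s(P' ∪ Q, c)): (i) for every completion P̄ of P, s(P̄ ∪ Q, c) ≤ λ; and (ii) for every completion P̄ of P, if c is a winner of P̄ ∪ Q (i.e., s(P̄ ∪ Q, c) ≥ s(P̄ ∪ Q, c') for all candidates c'), then s(P̄ ∪ Q, c) = λ. -/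
/-- `prefL n ℓ k` is the sum of the block lengths `ℓ j` over `j < k`:
the (0-indexed) first position of the `k`-th block of the scoring vector. -/
def prefL (n : ℕ) (ℓ : Fin n → ℕ) (k : ℕ) : ℕ :=
  ∑ j : Fin n, if (j : ℕ) < k then ℓ j else 0

/-- Candidates of Reduction 3: the element candidates of `X`, `Y`, `Z` (each of size `q`),
the distinguished candidate `c`, the fresh candidates `g`, `d`, `w`, and for each value
block `j` of the scoring vector (with multiplicity `ℓ j`) a set `H_j` of `ℓ j − 1` dummy
candidates. -/
inductive CandU (q : ℕ) (ℓ : Fin (3 * q + 4) → ℕ) where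
  | x (i : Fin q)
  | y (i : Fin q)
  | z (i : Fin q)
  | c
  | g
  | d
  | w
  | h (j : Fin (3 * q + 4)) (k : Fin (ℓ j - 1))

open Finset Function

section BlockScoring

variable {n m : ℕ} {ℓ a : Fin n → ℕ} {s : Fin m → ℕ}

lemma prefL_succ (ℓ : Fin n → ℕ) {k : ℕ} (hk : k < n) :
    prefL n ℓ (k + 1) = prefL n ℓ k + ℓ ⟨k, hk⟩ := by
  have hsplit : ∀ j : Fin n, (if (j : ℕ) < k + 1 then ℓ j else 0) =
      (if (j : ℕ) < k then ℓ j else 0) + if j = ⟨k, hk⟩ then ℓ j else 0 := by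
    intro j
    simp only [Fin.ext_iff]
    split_ifs <;> omega
  simp only [prefL, hsplit, sum_add_distrib, sum_ite_eq', mem_univ, if_true]

lemma prefL_mono (ℓ : Fin n → ℕ) : Monotone (prefL n ℓ) := by
  intro k k' h
  refine sum_le_sum fun j _ => ?_
  split_ifs <;> omega

lemma exists_prefL_le_lt_prefL_succ {v : ℕ} (hv : v < prefL n ℓ n) :
    ∃ j : Fin n, prefL n ℓ j ≤ v ∧ v < prefL n ℓ (j + 1) := by
  classical
  let P k := prefL n ℓ k ≤ v
  have hJ : P (Nat.findGreatest P n) := Nat.findGreatest_spec (Nat.zero_le n) (by simp [P, prefL])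
  have hJn : Nat.findGreatest P n < n :=
    (Nat.findGreatest_le n).lt_of_ne fun h => by rw [h] at hJ; exact hv.not_ge hJ
  exact ⟨⟨_, hJn⟩, hJ,
    not_le.mp (Nat.findGreatest_is_greatest (P := P) (Nat.lt_succ_self _) hJn)⟩

structure IsBlockScoring (ℓ a : Fin n → ℕ) (s : Fin m → ℕ) : Prop where
  length_eq : m = prefL n ℓ n
  apply_eq : ∀ (pos : Fin m) (j : Fin n),
    prefL n ℓ j ≤ pos → (pos : ℕ) < prefL n ℓ (j + 1) → s pos = a j

lemma IsBlockScoring.le_of_prefL_le (hs : IsBlockScoring ℓ a s) (ha : Antitone a)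
    {pos : Fin m} {j : Fin n} (h : prefL n ℓ j ≤ pos) : s pos ≤ a j := by
  obtain ⟨j', hj'₁, hj'₂⟩ := exists_prefL_le_lt_prefL_succ (pos.isLt.trans_eq hs.length_eq)
  have hjj' : j ≤ j' := by
    by_contra! hlt
    have := prefL_mono ℓ (show (j' : ℕ) + 1 ≤ j by omega)
    omega
  rw [hs.apply_eq pos j' hj'₁ hj'₂]
  exact ha hjj'

lemma IsBlockScoring.antitone (hs : IsBlockScoring ℓ a s) (ha : Antitone a) : Antitone s := by
  intro pos pos' h
  obtain ⟨j, hj₁, hj₂⟩ := exists_prefL_le_lt_prefL_succ (pos.isLt.trans_eq hs.length_eq)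
  rw [hs.apply_eq pos j hj₁ hj₂]
  exact hs.le_of_prefL_le ha (hj₁.trans h)

end BlockScoring

section Completion

variable {C : Type*} {m : ℕ}

def IsCompletionWithout (p : C ≃ Fin m) (g : C) (T : C ≃ Fin m) : Prop :=
  ∀ u v, u ≠ g → v ≠ g → p u < p v → T u < T v

variable {p T : C ≃ Fin m} {g u : C}

lemma IsCompletionWithout.card_erase_Iio_le (hT : IsCompletionWithout p g T) (hu : u ≠ g) :
    #((Iio (p u)).erase (p g)) ≤ T u := by
  calc #((Iio (p u)).erase (p g))
      ≤ #(Iio (T u)) := by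
        refine card_le_card_of_injOn (fun k => T (p.symm k)) (fun k hk => ?_) ?_
        · obtain ⟨hkg, hku⟩ := mem_erase.1 hk
          refine mem_Iio.2 (hT _ _ (fun h => hkg ?_) hu (by simpa using mem_Iio.1 hku))
          rw [← h, Equiv.apply_symm_apply]
        · exact (T.injective.comp p.symm.injective).injOn
    _ = T u := Fin.card_Iio _

lemma IsCompletionWithout.le_add_one (hT : IsCompletionWithout p g T) (hu : u ≠ g) :
    (p u : ℕ) ≤ T u + 1 := by
  have := pred_card_le_card_erase (s := Iio (p u)) (a := p g)
  rw [Fin.card_Iio] at this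
  have := hT.card_erase_Iio_le hu
  omega

lemma IsCompletionWithout.le_of_lt (hT : IsCompletionWithout p g T) (hu : u ≠ g)
    (hug : p u < p g) : p u ≤ T u := by
  have := hT.card_erase_Iio_le hu
  rwa [erase_eq_of_notMem (by simpa using hug.le), Fin.card_Iio] at this

end Completion

lemma exists_eq_of_image_fills_Ico {C ι : Type*} [Fintype ι] {b k : ℕ} {f : C → ℕ}
    (hf : Injective f) {e : ι → C} (he : Injective e) (hk : k ≤ Fintype.card ι)
    (he_mem : ∀ i, f (e i) ∈ Ico b (b + k)) {u : C} (hu : f u ∈ Ico b (b + k)) :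
    ∃ i, e i = u := by
  classical
  have hfill : univ.image (f ∘ e) = Ico b (b + k) := by
    refine eq_of_subset_of_card_le (fun v hv => ?_) ?_
    · obtain ⟨i, -, rfl⟩ := mem_image.1 hv
      exact he_mem i
    · rw [card_image_of_injective _ (hf.comp he), Nat.card_Ico, card_univ]
      omega
  obtain ⟨i, -, hi⟩ := mem_image.1 (hfill ▸ hu)
  exact ⟨i, hf hi⟩

section Profiles

variable {C : Type*} {m t : ℕ} (s : Fin m → ℕ)

lemma score_ofFn_append (T : Fin t → C ≃ Fin m) (Q : List (C ≃ Fin m)) (u : C) :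
    score s (List.ofFn T ++ Q) u = ∑ i, s (T i u) + score s Q u := by
  simp [score, List.map_ofFn, List.sum_ofFn, Function.comp_def]

lemma score_ofFn_append_le {T p : Fin t → C ≃ Fin m} (Q : List (C ≃ Fin m)) {u : C}
    (h : ∀ i, s (T i u) ≤ s (p i u)) :
    score s (List.ofFn T ++ Q) u ≤ score s (List.ofFn p ++ Q) u := by
  rw [score_ofFn_append, score_ofFn_append]
  exact Nat.add_le_add_right (sum_le_sum fun i _ => h i) _

lemma sum_score [Fintype C] (P : List (C ≃ Fin m)) :
    ∑ u, score s P u = P.length * ∑ k, s k := by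
  induction P with
  | nil => simp [score]
  | cons T P ih =>
    simp only [score, List.map_cons, List.sum_cons] at ih ⊢
    rw [sum_add_distrib, ih, Equiv.sum_comp T s, List.length_cons]
    ring

end Profiles

lemma sum_add_mul_eq_mul {q b c : ℕ} {f : Fin q → ℕ} (h : ∀ i, f i + b = c) :
    ∑ i, f i + q * b = q * c := by
  simpa [sum_add_distrib, mul_comm] using sum_congr rfl fun i (_ : i ∈ univ) => h i

namespace CandU

variable {q m : ℕ} {ℓ a : Fin (3 * q + 4) → ℕ} {s : Fin m → ℕ} {S : Fin q × Fin q × Fin q}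
  {p T : CandU q ℓ ≃ Fin m}

def equivSum : CandU q ℓ ≃
    (Fin q ⊕ Fin q ⊕ Fin q) ⊕ (Unit ⊕ Unit ⊕ Unit ⊕ Unit) ⊕ (Σ j, Fin (ℓ j - 1)) where
  toFun
    | x i => .inl (.inl i)
    | y i => .inl (.inr (.inl i))
    | z i => .inl (.inr (.inr i))
    | c => .inr (.inl (.inl ()))
    | g => .inr (.inl (.inr (.inl ())))
    | d => .inr (.inl (.inr (.inr (.inl ()))))
    | w => .inr (.inl (.inr (.inr (.inr ()))))
    | h j k => .inr (.inr ⟨j, k⟩)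
  invFun
    | .inl (.inl i) => x i
    | .inl (.inr (.inl i)) => y i
    | .inl (.inr (.inr i)) => z i
    | .inr (.inl (.inl ())) => c
    | .inr (.inl (.inr (.inl ()))) => g
    | .inr (.inl (.inr (.inr (.inl ())))) => d
    | .inr (.inl (.inr (.inr (.inr ())))) => w
    | .inr (.inr ⟨j, k⟩) => h j k
  left_inv u := by cases u <;> rfl
  right_inv u := by rcases u with ((i | i | i) | (⟨⟩ | ⟨⟩ | ⟨⟩ | ⟨⟩) | ⟨j, k⟩) <;> rfl

instance : Fintype (CandU q ℓ) := Fintype.ofEquiv _ equivSum.symm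

lemma sum_eq {M : Type*} [AddCommMonoid M] (f : CandU q ℓ → M) :
    ∑ u, f u = ∑ i, f (x i) + ∑ i, f (y i) + ∑ i, f (z i) + (f c + f g + f d + f w) +
      ∑ j, ∑ k, f (h j k) := by
  rw [← equivSum.symm.sum_comp]
  simp only [Fintype.sum_sum_type, Fintype.sum_sigma]
  simp [equivSum, add_assoc]

def IsWeak : CandU q ℓ → Prop
  | c | w | h _ _ => True
  | _ => False

lemma le_of_sum_eq_of_forall_le (σ τ : CandU q ℓ → ℕ)
    (hsum : ∑ u, σ u = ∑ u, τ u) (hwin : ∀ u, σ u ≤ σ c) (hweak : ∀ u, IsWeak u → σ u ≤ τ u)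
    (hX : ∀ i, τ (x i) + a ⟨3 * q, by omega⟩ = τ c + a ⟨3 * q + 1, by omega⟩)
    (hY : ∀ i, τ (y i) + a ⟨3 * q + 1, by omega⟩ = τ c + a ⟨3 * q + 2, by omega⟩)
    (hZ : ∀ i, τ (z i) + a ⟨3 * q + 2, by omega⟩ = τ c + a ⟨3 * q + 3, by omega⟩)
    (hG : τ g + q * a ⟨3 * q + 3, by omega⟩ = τ c + q * a ⟨3 * q - 1, by omega⟩)
    (hD : τ d + q * a ⟨3 * q - 1, by omega⟩ = τ c + q * a ⟨3 * q, by omega⟩) :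
    τ c ≤ σ c := by
  have hXsum := sum_add_mul_eq_mul hX
  have hYsum := sum_add_mul_eq_mul hY
  have hZsum := sum_add_mul_eq_mul hZ
  have hσx := sum_le_sum fun i (_ : i ∈ univ) => hwin (x i)
  have hσy := sum_le_sum fun i (_ : i ∈ univ) => hwin (y i)
  have hσz := sum_le_sum fun i (_ : i ∈ univ) => hwin (z i)
  have hσh := sum_le_sum fun j (_ : j ∈ univ) =>
    sum_le_sum fun k (_ : k ∈ univ) => hweak (h j k) trivial
  simp only [sum_const, card_univ, Fintype.card_fin, smul_eq_mul] at hσx hσy hσz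
  rw [sum_eq, sum_eq] at hsum
  -- the shifts by `a` telescope: `∑ τ = (3q+3) τ c + τ w + ∑ τ (h _ _)`, while the other sum is
  -- at most `(3q+3) σ c + τ w + ∑ τ (h _ _)`
  have key : (3 * q + 3) * τ c ≤ (3 * q + 3) * σ c := by
    linarith [hwin g, hwin d, hweak w trivial]
  exact le_of_mul_le_mul_left key (by omega)


structure IsReductionVote (S : Fin q × Fin q × Fin q) (p : CandU q ℓ ≃ Fin m) : Prop where
  g_pos : (p g : ℕ) = prefL (3 * q + 4) ℓ (3 * q - 1)
  d_pos : (p d : ℕ) = prefL (3 * q + 4) ℓ (3 * q)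
  x_pos : (p (x S.1) : ℕ) = prefL (3 * q + 4) ℓ (3 * q + 1)
  y_pos : (p (y S.2.1) : ℕ) = prefL (3 * q + 4) ℓ (3 * q + 2)
  z_pos : (p (z S.2.2) : ℕ) = prefL (3 * q + 4) ℓ (3 * q + 3)
  h_mem : ∀ (j : Fin (3 * q + 4)) k, prefL (3 * q + 4) ℓ j ≤ p (h j k) ∧
    (p (h j k) : ℕ) < prefL (3 * q + 4) ℓ (j + 1)

lemma IsReductionVote.exists_not_isWeak (hp : IsReductionVote S p) {j : ℕ}
    (hj : 3 * q - 1 ≤ j) (hj' : j < 3 * q + 4) :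
    ∃ u, ¬ IsWeak u ∧ (p u : ℕ) = prefL (3 * q + 4) ℓ j := by
  obtain rfl | rfl | rfl | rfl | rfl :
      j = 3 * q - 1 ∨ j = 3 * q ∨ j = 3 * q + 1 ∨ j = 3 * q + 2 ∨ j = 3 * q + 3 := by omega
  exacts [⟨g, id, hp.g_pos⟩, ⟨d, id, hp.d_pos⟩, ⟨_, id, hp.x_pos⟩, ⟨_, id, hp.y_pos⟩,
    ⟨_, id, hp.z_pos⟩]

lemma IsReductionVote.lt_g (hm : m = prefL (3 * q + 4) ℓ (3 * q + 4))
    (hp : IsReductionVote S p) {u : CandU q ℓ} (hu : u = c ∨ u = w) : p u < p g := by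
  obtain ⟨j, hj₁, hj₂⟩ := exists_prefL_le_lt_prefL_succ ((p u).isLt.trans_eq hm)
  by_cases hj : (j : ℕ) + 1 ≤ 3 * q - 1
  · rw [Fin.lt_def, hp.g_pos]
    exact hj₂.trans_le (prefL_mono ℓ hj)
  obtain ⟨v, hv, hvpos⟩ := hp.exists_not_isWeak (by omega) j.isLt
  have hsucc : prefL (3 * q + 4) ℓ (j + 1) = prefL (3 * q + 4) ℓ j + ℓ j := prefL_succ ℓ j.isLt
  let e : Option (Fin (ℓ j - 1)) → CandU q ℓ := fun o => o.elim v (h j)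
  have he : Injective e := by
    rintro (_ | k) (_ | k') hkk
    · rfl
    · exact absurd ((show v = h j k' from hkk) ▸ trivial) hv
    · exact absurd ((show h j k = v from hkk) ▸ trivial) hv
    · cases hkk; rfl
  have he_mem :
      ∀ o, (p (e o) : ℕ) ∈ Ico (prefL (3 * q + 4) ℓ j) (prefL (3 * q + 4) ℓ j + ℓ j) := by
    rintro (_ | k) <;> rw [mem_Ico, ← hsucc]
    · exact ⟨hvpos.ge, hvpos.trans_lt (hj₁.trans_lt hj₂)⟩
    · exact hp.h_mem j k
  obtain ⟨(_ | k), hk⟩ := exists_eq_of_image_fills_Ico (Fin.val_injective.comp p.injective) he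
    (by simp only [Fintype.card_option, Fintype.card_fin]; omega) he_mem
    (mem_Ico.2 ⟨hj₁, hsucc ▸ hj₂⟩)
  · obtain rfl : v = u := hk
    rcases hu with rfl | rfl <;> exact (hv trivial).elim
  · rcases hu with rfl | rfl <;> cases hk

lemma IsReductionVote.apply_le (hs : IsBlockScoring ℓ a s) (ha : Antitone a)
    (hp : IsReductionVote S p) (hT : IsCompletionWithout p g T) {u : CandU q ℓ}
    (hu : IsWeak u) : s (T u) ≤ s (p u) := by
  have hlt_g {u : CandU q ℓ} (hug : p u < p g) : s (T u) ≤ s (p u) :=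
    hs.antitone ha (hT.le_of_lt (by rintro rfl; exact hug.false) hug)
  match u, hu with
  | c, _ => exact hlt_g (hp.lt_g hs.length_eq (.inl rfl))
  | w, _ => exact hlt_g (hp.lt_g hs.length_eq (.inr rfl))
  | h j k, _ =>
    obtain ⟨hk₁, hk₂⟩ := hp.h_mem j k
    by_cases hj : (j : ℕ) + 1 ≤ 3 * q - 1
    · refine hlt_g ?_
      rw [Fin.lt_def, hp.g_pos]
      exact hk₂.trans_le (prefL_mono ℓ hj)
    -- the first position of block `j` is taken, so `h j k` keeps at least its block in `T`
    obtain ⟨v, hv, hvpos⟩ := hp.exists_not_isWeak (by omega) j.isLt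
    have hne : (p (h j k) : ℕ) ≠ p v := fun hpv => hv (p.injective (Fin.ext hpv) ▸ trivial)
    have hT_pos := hT.le_add_one (u := h j k) (by simp)
    rw [hs.apply_eq _ j hk₁ hk₂]
    exact hs.le_of_prefL_le ha (by omega)

end CandU

/-- in Reduction 3 (unbounded case: `m' = 3q+4` distinct values
`a 0 > a 1 > … > a (3q+3)` with multiplicities `ℓ`, `pᵢ` obtained from `p'ᵢ` by deleting
`g`, and `Q` satisfying the stated score conditions with `λ = s(P'∪Q, c)`):
(i) for every completion `P̄` of `P`, `s(P̄∪Q, c) ≤ λ`; and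
(ii) for every completion `P̄` of `P`, if `c` is a winner of `P̄∪Q` then `s(P̄∪Q, c) = λ`. -/
theorem stmt9 (q t m : ℕ)
    (a : Fin (3 * q + 4) → ℕ) (haAnti : StrictAnti a)
    (ℓ : Fin (3 * q + 4) → ℕ)
    (hm : m = prefL (3 * q + 4) ℓ (3 * q + 4))
    (s : Fin m → ℕ)
    (hs : ∀ (pos : Fin m) (j : Fin (3 * q + 4)),
      prefL (3 * q + 4) ℓ (j : ℕ) ≤ (pos : ℕ) →
      (pos : ℕ) < prefL (3 * q + 4) ℓ ((j : ℕ) + 1) → s pos = a j)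
    (S : Fin t → Fin q × Fin q × Fin q)
    (p' : Fin t → (CandU q ℓ ≃ Fin m))
    (hgpos : ∀ i, (p' i CandU.g).val = prefL (3 * q + 4) ℓ (3 * q - 1))
    (hdpos : ∀ i, (p' i CandU.d).val = prefL (3 * q + 4) ℓ (3 * q))
    (hxpos : ∀ i, (p' i (CandU.x (S i).1)).val = prefL (3 * q + 4) ℓ (3 * q + 1))
    (hypos : ∀ i, (p' i (CandU.y (S i).2.1)).val = prefL (3 * q + 4) ℓ (3 * q + 2))
    (hzpos : ∀ i, (p' i (CandU.z (S i).2.2)).val = prefL (3 * q + 4) ℓ (3 * q + 3))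
    (hhpos : ∀ (i : Fin t) (j : Fin (3 * q + 4)) (k : Fin (ℓ j - 1)),
      prefL (3 * q + 4) ℓ (j : ℕ) ≤ (p' i (CandU.h j k)).val ∧
      (p' i (CandU.h j k)).val < prefL (3 * q + 4) ℓ ((j : ℕ) + 1))
    (Q : List (CandU q ℓ ≃ Fin m))
    (lam : ℕ) (hlam : score s (List.ofFn p' ++ Q) CandU.c = lam)
    (hX : ∀ ix : Fin q, score s (List.ofFn p' ++ Q) (CandU.x ix) + a ⟨3 * q, by omega⟩ =
      lam + a ⟨3 * q + 1, by omega⟩)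
    (hY : ∀ iy : Fin q, score s (List.ofFn p' ++ Q) (CandU.y iy) + a ⟨3 * q + 1, by omega⟩ =
      lam + a ⟨3 * q + 2, by omega⟩)
    (hZ : ∀ iz : Fin q, score s (List.ofFn p' ++ Q) (CandU.z iz) + a ⟨3 * q + 2, by omega⟩ =
      lam + a ⟨3 * q + 3, by omega⟩)
    (hG : score s (List.ofFn p' ++ Q) CandU.g + q * a ⟨3 * q + 3, by omega⟩ =
      lam + q * a ⟨3 * q - 1, by omega⟩)
    (hD : score s (List.ofFn p' ++ Q) CandU.d + q * a ⟨3 * q - 1, by omega⟩ =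
      lam + q * a ⟨3 * q, by omega⟩) :
    (∀ T : Fin t → (CandU q ℓ ≃ Fin m),
      (∀ (i : Fin t) (u v : CandU q ℓ),
        u ≠ CandU.g → v ≠ CandU.g → p' i u < p' i v → T i u < T i v) →
      score s (List.ofFn T ++ Q) CandU.c ≤ lam) ∧
    (∀ T : Fin t → (CandU q ℓ ≃ Fin m),
      (∀ (i : Fin t) (u v : CandU q ℓ),
        u ≠ CandU.g → v ≠ CandU.g → p' i u < p' i v → T i u < T i v) →
      (∀ c', score s (List.ofFn T ++ Q) c' ≤ score s (List.ofFn T ++ Q) CandU.c) →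
      score s (List.ofFn T ++ Q) CandU.c = lam) := by
  subst hlam
  have hsc : IsBlockScoring ℓ a s := ⟨hm, hs⟩
  have hp (i : Fin t) : CandU.IsReductionVote (S i) (p' i) :=
    ⟨hgpos i, hdpos i, hxpos i, hypos i, hzpos i, hhpos i⟩
  have hweak (T : Fin t → (CandU q ℓ ≃ Fin m)) (hT : ∀ i, IsCompletionWithout (p' i) .g (T i))
      (u : CandU q ℓ) (hu : u.IsWeak) :
      score s (List.ofFn T ++ Q) u ≤ score s (List.ofFn p' ++ Q) u :=
    score_ofFn_append_le s Q fun i => (hp i).apply_le hsc haAnti.antitone (hT i) hu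
  refine ⟨fun T hT => hweak T hT .c trivial, fun T hT hwin => ?_⟩
  refine le_antisymm (hweak T hT .c trivial) ?_
  refine CandU.le_of_sum_eq_of_forall_le _ _ ?_ hwin (hweak T hT) hX hY hZ hG hD
  simp [sum_score]
end
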